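/- arXiv:0710.2682 — 6 statements merged into one kernel-verified Lean document; each statement's English description precedes it below -/
import Mathlib

section
/- Let g = sl(2,ℂ) with standard basis X, H, Y, and let M = F_μ be the g-module with basis {t₀^{a}t₁^{b} : a+b = μ₀+μ₁, a ∈ μ₀+ℤ} where X = t₀∂/∂t₁, Y = t₁∂/∂t₀, H = t₀∂/∂t₀ − t₁∂/∂t₁, with μ₀, μ₁ ∉ ℤ. Then the map c : g → End(M) defined by c(H) = 0, c(X) = 0, c(Y) = b·X^{-1} (for b ∈ ℂ, where X acts invertibly on M so X^{-1} makes sense) satisfies the 1-cocycle condition c([g₁,g₂]) = [g₁, c(g₂)] − [g₂, c(g₁)] for all g₁, g₂ ∈ g. -/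
/-! The cuspidal `sl(2)`-module `F_μ = t^μ ℂ[t₀^{±1}, t₁^{±1}]` (total degree `|μ|`), realized on
coefficient functions `ℤ → ℂ` with respect to the basis `e_k = t₀^{μ₀+k} t₁^{μ₁-k}`.
The standard generators act by `X = t₀∂₁`, `Y = t₁∂₀`, `H = t₀∂₀ − t₁∂₁`. -/

/-- The action of `X = t₀ ∂/∂t₁` on `F_μ`:  `X e_k = (μ₁ - k) e_{k+1}`. -/
noncomputable def Xop (μ₁ : ℂ) : Module.End ℂ (ℤ → ℂ) where
  toFun f := fun k => (μ₁ - ((k : ℂ) - 1)) * f (k - 1)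
  map_add' f g := by funext k; simp [mul_add]
  map_smul' c f := by funext k; simp [smul_eq_mul]; ring

/-- The action of `Y = t₁ ∂/∂t₀` on `F_μ`:  `Y e_k = (μ₀ + k) e_{k-1}`. -/
noncomputable def Yop (μ₀ : ℂ) : Module.End ℂ (ℤ → ℂ) where
  toFun f := fun k => (μ₀ + ((k : ℂ) + 1)) * f (k + 1)
  map_add' f g := by funext k; simp [mul_add]
  map_smul' c f := by funext k; simp [smul_eq_mul]; ring

/-- The action of `H = t₀ ∂/∂t₀ − t₁ ∂/∂t₁` on `F_μ`:  `H e_k = (μ₀ - μ₁ + 2k) e_k`. -/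
noncomputable def Hop (μ₀ μ₁ : ℂ) : Module.End ℂ (ℤ → ℂ) where
  toFun f := fun k => (μ₀ - μ₁ + 2 * (k : ℂ)) * f k
  map_add' f g := by funext k; simp [mul_add]
  map_smul' c f := by funext k; simp [smul_eq_mul]; ring

/-- The inverse `X⁻¹` of the (bijective, since `μ₁ ∉ ℤ`) action of `X` on `F_μ`. -/
noncomputable def Xinv (μ₁ : ℂ) : Module.End ℂ (ℤ → ℂ) where
  toFun f := fun k => f (k + 1) / (μ₁ - (k : ℂ))
  map_add' f g := by funext k; simp [add_div]
  map_smul' c f := by funext k; simp [smul_eq_mul]; ring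

attribute [local instance 100] LieRing.ofAssociativeRing

/-! The cocycle identity is bilinear and alternating in `(g₁, g₂)`, so on an `sl₂`-triple with
`c X = c H = 0` it reduces to two identities: `⁅ρ X, c Y⁆ = 0` and `⁅ρ H, c Y⁆ = -2 • c Y`.
For `c Y = b • X⁻¹` the first holds because `X⁻¹` commutes with `X`, the second because `X⁻¹`,
like `Y`, lowers the `H`-weight by `2`. -/

section CocycleDefect

variable {R L A : Type*} [CommRing R] [LieRing L] [LieAlgebra R L] [LieRing A] [LieAlgebra R A]

def cocycleDefect (ρ : L →ₗ⁅R⁆ A) (c : L →ₗ[R] A) : L →ₗ[R] L →ₗ[R] A :=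
  LinearMap.mk₂ R (fun g₁ g₂ => c ⁅g₁, g₂⁆ - (⁅ρ g₁, c g₂⁆ - ⁅ρ g₂, c g₁⁆))
    (fun _ _ _ => by simp only [add_lie, lie_add, map_add]; abel)
    (fun _ _ _ => by simp only [smul_lie, lie_smul, map_smul, smul_sub])
    (fun _ _ _ => by simp only [add_lie, lie_add, map_add]; abel)
    (fun _ _ _ => by simp only [smul_lie, lie_smul, map_smul, smul_sub])

variable {ρ : L →ₗ⁅R⁆ A} {c : L →ₗ[R] A}

theorem cocycleDefect_apply (g₁ g₂ : L) :
    cocycleDefect ρ c g₁ g₂ = c ⁅g₁, g₂⁆ - (⁅ρ g₁, c g₂⁆ - ⁅ρ g₂, c g₁⁆) :=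
  rfl

theorem cocycleDefect_self (g : L) : cocycleDefect ρ c g g = 0 := by
  simp [cocycleDefect_apply]

theorem cocycleDefect_swap (g₁ g₂ : L) :
    cocycleDefect ρ c g₂ g₁ = -cocycleDefect ρ c g₁ g₂ := by
  simp only [cocycleDefect_apply, ← lie_skew g₁ g₂, map_neg]
  abel

theorem cocycleDefect_eq_zero_of_span {s : Set L} (hs : Submodule.span R s = ⊤)
    (h : ∀ u ∈ s, ∀ v ∈ s, cocycleDefect ρ c u v = 0) : cocycleDefect ρ c = 0 :=
  LinearMap.ext_on hs fun u hu => LinearMap.ext_on hs fun v hv => h u hu v hv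

theorem cocycleDefect_eq_zero_of_sl2 {X H Y : L} (hHX : ⁅H, X⁆ = (2 : R) • X)
    (hHY : ⁅H, Y⁆ = (-2 : R) • Y) (hXY : ⁅X, Y⁆ = H)
    (hspan : Submodule.span R {X, H, Y} = ⊤) (hcX : c X = 0) (hcH : c H = 0)
    (hX : ⁅ρ X, c Y⁆ = 0) (hH : ⁅ρ H, c Y⁆ = (-2 : R) • c Y) : cocycleDefect ρ c = 0 := by
  have hXY' : cocycleDefect ρ c X Y = 0 := by
    simp [cocycleDefect_apply, hXY, hcX, hcH, hX]
  have hHX' : cocycleDefect ρ c H X = 0 := by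
    simp [cocycleDefect_apply, hHX, hcX, hcH]
  have hHY' : cocycleDefect ρ c H Y = 0 := by
    simp [cocycleDefect_apply, hHY, hcH, hH]
  have hswap : ∀ u v, cocycleDefect ρ c u v = 0 → cocycleDefect ρ c v u = 0 := fun u v h => by
    rw [cocycleDefect_swap, h, neg_zero]
  refine cocycleDefect_eq_zero_of_span hspan fun u hu v hv => ?_
  rcases hu with rfl | rfl | rfl <;> rcases hv with rfl | rfl | rfl <;>
    first | exact cocycleDefect_self _ | assumption | (apply hswap; assumption)

end CocycleDefect

theorem Xop_mul_Xinv {μ₁ : ℂ} (hμ₁ : ∀ z : ℤ, μ₁ ≠ z) : Xop μ₁ * Xinv μ₁ = 1 := by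
  ext f k
  have h : μ₁ - ((k : ℂ) - 1) ≠ 0 := mod_cast sub_ne_zero.mpr (hμ₁ (k - 1))
  simp [Xop, Xinv, field]

theorem Xinv_mul_Xop {μ₁ : ℂ} (hμ₁ : ∀ z : ℤ, μ₁ ≠ z) : Xinv μ₁ * Xop μ₁ = 1 := by
  ext f k
  have h : μ₁ - k ≠ 0 := sub_ne_zero.mpr (hμ₁ k)
  simp [Xop, Xinv, field]

theorem lie_Xop_Xinv {μ₁ : ℂ} (hμ₁ : ∀ z : ℤ, μ₁ ≠ z) : ⁅Xop μ₁, Xinv μ₁⁆ = 0 := by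
  rw [Ring.lie_def, Xop_mul_Xinv hμ₁, Xinv_mul_Xop hμ₁, sub_self]

theorem lie_Hop_Xinv (μ₀ μ₁ : ℂ) : ⁅Hop μ₀ μ₁, Xinv μ₁⁆ = (-2 : ℂ) • Xinv μ₁ := by
  ext f k
  simp [Hop, Xinv, Ring.lie_def, field]

theorem sl2_cocycle_condition_general
    (L : Type*) [LieRing L] [LieAlgebra ℂ L] (X H Y : L)
    (hHX : ⁅H, X⁆ = (2 : ℂ) • X) (hHY : ⁅H, Y⁆ = (-2 : ℂ) • Y) (hXY : ⁅X, Y⁆ = H)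
    (hspan : Submodule.span ℂ {X, H, Y} = (⊤ : Submodule ℂ L))
    (μ₀ μ₁ : ℂ) (hμ₁ : ∀ z : ℤ, μ₁ ≠ z)
    (ρ : L →ₗ⁅ℂ⁆ Module.End ℂ (ℤ → ℂ))
    (hρX : ρ X = Xop μ₁) (hρH : ρ H = Hop μ₀ μ₁)
    (b : ℂ) (c : L →ₗ[ℂ] Module.End ℂ (ℤ → ℂ))
    (hcX : c X = 0) (hcH : c H = 0) (hcY : c Y = b • Xinv μ₁) :
    ∀ g₁ g₂ : L, c ⁅g₁, g₂⁆ = ⁅ρ g₁, c g₂⁆ - ⁅ρ g₂, c g₁⁆ := by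
  have hX : ⁅ρ X, c Y⁆ = 0 := by
    rw [hρX, hcY, lie_smul b (Xop μ₁) (Xinv μ₁), lie_Xop_Xinv hμ₁, smul_zero]
  have hH : ⁅ρ H, c Y⁆ = (-2 : ℂ) • c Y := by
    rw [hρH, hcY, lie_smul b (Hop μ₀ μ₁) (Xinv μ₁), lie_Hop_Xinv, smul_comm]
  have hdefect := cocycleDefect_eq_zero_of_sl2 hHX hHY hXY hspan hcX hcH hX hH
  intro g₁ g₂
  exact sub_eq_zero.mp (LinearMap.congr_fun₂ hdefect g₁ g₂)

/-- For `g = sl(2,ℂ)` with standard basis `X, H, Y` acting on the cuspidal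
module `M = F_μ` (`μ₀, μ₁ ∉ ℤ`), the map `c : g → End(M)` with `c(H) = c(X) = 0` and
`c(Y) = b·X⁻¹` satisfies the 1-cocycle condition
`c([g₁,g₂]) = [g₁, c(g₂)] − [g₂, c(g₁)]` for all `g₁, g₂ ∈ g`. -/
theorem sl2_cocycle_condition
    (L : Type*) [LieRing L] [LieAlgebra ℂ L] (X H Y : L)
    (hHX : ⁅H, X⁆ = (2 : ℂ) • X) (hHY : ⁅H, Y⁆ = (-2 : ℂ) • Y) (hXY : ⁅X, Y⁆ = H)
    (hspan : Submodule.span ℂ {X, H, Y} = (⊤ : Submodule ℂ L))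
    (μ₀ μ₁ : ℂ) (hμ₀ : ∀ z : ℤ, μ₀ ≠ z) (hμ₁ : ∀ z : ℤ, μ₁ ≠ z)
    (ρ : L →ₗ⁅ℂ⁆ Module.End ℂ (ℤ → ℂ))
    (hρX : ρ X = Xop μ₁) (hρH : ρ H = Hop μ₀ μ₁) (hρY : ρ Y = Yop μ₀)
    (b : ℂ) (c : L →ₗ[ℂ] Module.End ℂ (ℤ → ℂ))
    (hcX : c X = 0) (hcH : c H = 0) (hcY : c Y = b • Xinv μ₁) :
    ∀ g₁ g₂ : L, c ⁅g₁, g₂⁆ = ⁅ρ g₁, c g₂⁆ - ⁅ρ g₂, c g₁⁆ :=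
  sl2_cocycle_condition_general L X H Y hHX hHY hXY hspan μ₀ μ₁ hμ₁ ρ hρX hρH b c hcX hcH hcY
end

section
/- With the setup of the previous statement (g = sl(2,ℂ), M = F_μ cuspidal), the cocycle c(H)=c(X)=0, c(Y)=b·X^{-1} with b ≠ 0 is not a coboundary; that is, there is no h-equivariant φ ∈ End(M) with c(g) = [g,φ] for all g ∈ g. Consequently Ext¹ of M with itself in the category of weight sl(2)-modules is one-dimensional. -/
/-- For `g = sl(2,ℂ)` acting on the cuspidal module `M = F_μ` (`μ₀,μ₁ ∉ ℤ`),
the cocycle `c(H) = c(X) = 0`, `c(Y) = b·X⁻¹` with `b ≠ 0` is not a coboundary: there is no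
`h`-equivariant `φ ∈ End(M)` (i.e. `φ` commuting with the action of `H`) such that
`c(g) = [g, φ]` for all `g ∈ g` — equivalently, with `[X,φ] = 0`, `[H,φ] = 0` and
`[Y,φ] = b·X⁻¹`.  (Hence the class of `c` spans the one-dimensional space
`Ext¹(M,M)` in the category of weight `sl(2)`-modules.) -/
theorem sl2_cocycle_not_coboundary
    (μ₀ μ₁ : ℂ) (hμ₀ : ∀ z : ℤ, μ₀ ≠ z) (hμ₁ : ∀ z : ℤ, μ₁ ≠ z)
    (b : ℂ) (hb : b ≠ 0) :
    ¬ ∃ φ : Module.End ℂ (ℤ → ℂ),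
        ⁅Hop μ₀ μ₁, φ⁆ = 0 ∧ ⁅Xop μ₁, φ⁆ = 0 ∧ ⁅Yop μ₀, φ⁆ = b • Xinv μ₁ := by
  rintro ⟨φ, -, h2, h3⟩
  have hμ₁' : μ₁ + 1 ≠ 0 := by
    intro h
    exact hμ₁ (-1) (by push_cast; linear_combination h)
  have hμ₀' : μ₀ ≠ 0 := by simpa using hμ₀ 0
  set δ0 : ℤ → ℂ := fun k => if k = 0 then 1 else 0 with hδ0
  set δm : ℤ → ℂ := fun k => if k = -1 then 1 else 0 with hδm
  have hX : Xop μ₁ δm = (μ₁ + 1) • δ0 := by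
    funext k
    simp only [Xop, LinearMap.coe_mk, AddHom.coe_mk, hδ0, hδm, Pi.smul_apply, smul_eq_mul]
    by_cases hk : k = 0
    · subst hk; norm_num
    · have h1 : k - 1 ≠ -1 := by omega
      simp [hk, h1]
  have hY : Yop μ₀ δ0 = μ₀ • δm := by
    funext k
    simp only [Yop, LinearMap.coe_mk, AddHom.coe_mk, hδ0, hδm, Pi.smul_apply, smul_eq_mul]
    by_cases hk : k = -1
    · subst hk; norm_num
    · have h1 : k + 1 ≠ 0 := by omega
      simp [hk, h1]
  have e2 := congrFun (congrArg (fun T : Module.End ℂ (ℤ → ℂ) => T δm) h2) 0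
  simp only [Ring.lie_def, LinearMap.sub_apply, Module.End.mul_apply, hX, map_smul,
    LinearMap.zero_apply, Pi.sub_apply, Pi.smul_apply, smul_eq_mul, Pi.zero_apply] at e2
  -- e2 : (Xop μ₁) (φ δm) 0 - (μ₁ + 1) * (φ δ0) 0 = 0
  have e2' : (μ₁ + 1) * (φ δm) (-1) - (μ₁ + 1) * (φ δ0) 0 = 0 := by
    have : (Xop μ₁) (φ δm) 0 = (μ₁ + 1) * (φ δm) (-1) := by
      simp only [Xop, LinearMap.coe_mk, AddHom.coe_mk]
      norm_num
    rw [this] at e2; exact e2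
  have eC : (φ δm) (-1) = (φ δ0) 0 := by
    exact mul_left_cancel₀ hμ₁' (by linear_combination e2')
  have e3 := congrFun (congrArg (fun T : Module.End ℂ (ℤ → ℂ) => T δ0) h3) (-1)
  simp only [Ring.lie_def, LinearMap.sub_apply, Module.End.mul_apply, hY, map_smul,
    LinearMap.smul_apply, Pi.sub_apply, Pi.smul_apply, smul_eq_mul] at e3
  -- e3 : (Yop μ₀) (φ δ0) (-1) - μ₀ * (φ δm) (-1) = b * (Xinv μ₁ δ0) (-1)
  have l1 : (Yop μ₀) (φ δ0) (-1) = μ₀ * (φ δ0) 0 := by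
    simp only [Yop, LinearMap.coe_mk, AddHom.coe_mk]
    norm_num
  have l2 : (Xinv μ₁ δ0) (-1) = 1 / (μ₁ + 1) := by
    simp only [Xinv, LinearMap.coe_mk, AddHom.coe_mk, hδ0]
    norm_num
  rw [l1, l2, eC] at e3
  have hz : b * (1 / (μ₁ + 1)) = 0 := by linear_combination -e3
  rw [mul_one_div, div_eq_zero_iff] at hz
  rcases hz with h | h
  · exact hb h
  · exact hμ₁' h
end

section
/- Let s = h ⊕ g₁ where h is abelian and g₁ = span(X₁,...,X_n) is an abelian ideal of s consisting of ad(h)-eigenvectors, and let M be a weight s-module on which each X_i acts bijectively and which is free as a ℂ[X₁^{±1},...,X_n^{±1}]-module. Then every short exact sequence of weight s-modules 0 → M → M' → M → 0 (with M' semisimple over h) splits; i.e. Ext¹_{(s,h)}(M,M) = 0. -/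
/-!
By the five lemma each `X i` also acts bijectively on the middle term `M'`, so the commuting
operators `X i` make `M'` a module over the Laurent polynomial ring `R = ℂ[X₁^{±1}, …, Xₙ^{±1}]`,
and `g` is `R`-linear because it commutes with the generators. Since `M` is free over `R`, `g` has
an `R`-linear section `σ₀`, i.e. a linear section commuting with every `X i`. Replacing `σ₀` by
its weight-preserving part (on a weight vector `m` of weight `χ`, take the `χ`-component of
`σ₀ m`) gives a section commuting with `h`; it still commutes with each `X i` because `X i` shifts
every weight by the same `αᵢ`. As `h` and the `X i` span `s`, this section is `s`-linear.
-/

namespace LinearMap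

variable {R : Type*} [CommRing R] {A B C : Type*}
  [AddCommGroup A] [Module R A] [AddCommGroup B] [Module R B] [AddCommGroup C] [Module R C]

theorem bijective_of_shortExact {f : A →ₗ[R] B} {g : B →ₗ[R] C}
    (hf : Function.Injective f) (hg : Function.Surjective g) (hfg : Function.Exact f g)
    {a : A →ₗ[R] A} {b : B →ₗ[R] B} {c : C →ₗ[R] C} (hab : f ∘ₗ a = b ∘ₗ f)
    (hbc : g ∘ₗ b = c ∘ₗ g) (ha : Function.Bijective a) (hc : Function.Bijective c) :
    Function.Bijective b :=
  have hf' := (exact_zero_iff_injective Unit f).2 hf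
  have hg' := (exact_zero_iff_surjective Unit g).2 hg
  bijective_of_surjective_of_bijective_of_bijective_of_injective 0 f g 0 0 f g 0 0 a b c 0
    (by simp) hab hbc (by simp) hf' hfg hg' hf' hfg hg' (fun _ => ⟨0, Subsingleton.elim _ _⟩)
    ha hc (fun _ _ _ => Subsingleton.elim _ _)

end LinearMap

theorem Finsupp.addSubgroupClosure_range_single_one (ι : Type*) :
    AddSubgroup.closure (Set.range fun i : ι => Finsupp.single i (1 : ℤ)) = ⊤ := by
  rw [← coe_basisSingleOne, ← Submodule.span_int_eq_addSubgroupClosure,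
    Finsupp.basisSingleOne.span_eq, Submodule.top_toAddSubgroup]

namespace AddMonoidAlgebra

section Linear

variable {k G : Type*} [CommSemiring k] [AddGroup G] {M N : Type*}
  [AddCommMonoid M] [Module k M] [Module (AddMonoidAlgebra k G) M]
  [IsScalarTower k (AddMonoidAlgebra k G) M]
  [AddCommMonoid N] [Module k N] [Module (AddMonoidAlgebra k G) N]
  [IsScalarTower k (AddMonoidAlgebra k G) N]

theorem map_smul_of_map_single_smul (φ : M →ₗ[k] N) {S : Set G}
    (hS : AddSubgroup.closure S = ⊤)
    (hφ : ∀ g ∈ S, ∀ m, φ (single g (1 : k) • m) = single g (1 : k) • φ m)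
    (r : AddMonoidAlgebra k G) (m : M) : φ (r • m) = r • φ m := by
  let H : AddSubgroup G :=
    { carrier := {g | ∀ m, φ (single g (1 : k) • m) = single g (1 : k) • φ m}
      zero_mem' := by simp [← one_def]
      add_mem' := by
        intro g g' hg hg' m
        have hmul : single (g + g') (1 : k) = single g 1 * single g' 1 := by
          rw [single_mul_single, one_mul]
        rw [hmul, mul_smul, mul_smul, hg, hg']
      neg_mem' := by
        intro g hg m
        have hinv : ∀ g₁ g₂ : G, g₁ + g₂ = 0 → single g₁ (1 : k) * single g₂ 1 = 1 :=
          fun g₁ g₂ h => by rw [single_mul_single, one_mul, h, one_def]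
        calc φ (single (-g) (1 : k) • m)
            = single (-g) (1 : k) • single g (1 : k) • φ (single (-g) (1 : k) • m) := by
              rw [← mul_smul, hinv _ _ (neg_add_cancel g), one_smul]
          _ = single (-g) (1 : k) • φ m := by
              rw [← hg, ← mul_smul, hinv _ _ (add_neg_cancel g), one_smul] }
  have hH : ∀ g, g ∈ H := fun g => (AddSubgroup.closure_le H).2 hφ (hS ▸ AddSubgroup.mem_top g)
  induction r using AddMonoidAlgebra.induction_on generalizing m with
  | of g => exact hH (Multiplicative.toAdd g) m
  | add x y hx hy => simp only [add_smul, map_add, hx, hy]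
  | smul c x hx => rw [smul_assoc, map_smul, hx, smul_assoc]

end Linear

section Units

variable {k A ι : Type*} [CommSemiring k] [Semiring A] [Algebra k A] [Fintype ι]

noncomputable def liftUnits (u : ι → Aˣ) (hu : ∀ i j, Commute (u i) (u j)) :
    AddMonoidAlgebra k (ι →₀ ℤ) →ₐ[k] A :=
  lift k A (ι →₀ ℤ) <| (Units.coeHom A).comp <|
    (MonoidHom.noncommPiCoprod (fun i => zpowersHom Aˣ (u i))
      fun i j _ x y => (hu i j).zpow_zpow x.toAdd y.toAdd).comp <|
    ((MulEquiv.funMultiplicative ι ℤ).toMonoidHom.comp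
      (AddEquiv.toMultiplicative Finsupp.addEquivFunOnFinite).toMonoidHom)

theorem liftUnits_single [DecidableEq ι] (u : ι → Aˣ) (hu : ∀ i j, Commute (u i) (u j))
    (i : ι) : liftUnits (k := k) u hu (single (Finsupp.single i 1) 1) = u i := by
  have hpack : MulEquiv.funMultiplicative ι ℤ (AddEquiv.toMultiplicative Finsupp.addEquivFunOnFinite
      (Multiplicative.ofAdd (Finsupp.single i (1 : ℤ)))) =
      Pi.mulSingle i (Multiplicative.ofAdd 1) := by
    funext j
    change Multiplicative.ofAdd (Finsupp.single i (1 : ℤ) j) = _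
    rw [Finsupp.single_apply, Pi.mulSingle_apply]
    split_ifs <;> simp_all [eq_comm]
  simp only [liftUnits, lift_single, one_smul, MonoidHom.comp_apply, MulEquiv.toMonoidHom_eq_coe,
    MonoidHom.coe_coe, hpack]
  exact congrArg Units.val
    ((MonoidHom.noncommPiCoprod_mulSingle (fun i => zpowersHom Aˣ (u i)) i _).trans (zpow_one _))

end Units

theorem exists_rightInverse_commute_of_projective {k ι V W : Type*} [CommRing k] [Fintype ι]
    [DecidableEq ι]
    [AddCommGroup V] [Module k V] [Module (AddMonoidAlgebra k (ι →₀ ℤ)) V]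
    [IsScalarTower k (AddMonoidAlgebra k (ι →₀ ℤ)) V]
    [Module.Projective (AddMonoidAlgebra k (ι →₀ ℤ)) V]
    [AddCommGroup W] [Module k W] (u : ι → (Module.End k W)ˣ) (hu : ∀ i j, Commute (u i) (u j))
    (π : W →ₗ[k] V) (hπ : Function.Surjective π)
    (hπu : ∀ i w, π ((u i : Module.End k W) w) = single (Finsupp.single i (1 : ℤ)) (1 : k) • π w) :
    ∃ σ : V →ₗ[k] W, π ∘ₗ σ = LinearMap.id ∧
      ∀ i v, σ (single (Finsupp.single i (1 : ℤ)) (1 : k) • v) = (u i : Module.End k W) (σ v) := by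
  let _ : Module (AddMonoidAlgebra k (ι →₀ ℤ)) W := Module.compHom W (liftUnits u hu).toRingHom
  have : IsScalarTower k (AddMonoidAlgebra k (ι →₀ ℤ)) W :=
    ⟨fun c r w => by
      change liftUnits u hu (c • r) w = c • liftUnits u hu r w
      rw [map_smul, LinearMap.smul_apply]⟩
  have hsingle : ∀ i (w : W),
      single (Finsupp.single i (1 : ℤ)) (1 : k) • w = (u i : Module.End k W) w := fun i w =>
    congrArg (· w) (liftUnits_single u hu i)
  let πR : W →ₗ[AddMonoidAlgebra k (ι →₀ ℤ)] V :=
    { π with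
      map_smul' := map_smul_of_map_single_smul π (Finsupp.addSubgroupClosure_range_single_one ι)
        (by rintro _ ⟨i, rfl⟩ w; rw [hsingle, hπu]) }
  obtain ⟨σ, hσ⟩ := Module.projective_lifting_property πR LinearMap.id hπ
  refine ⟨σ.restrictScalars k, LinearMap.ext fun v => congrArg (· v) hσ, fun i v => ?_⟩
  rw [LinearMap.restrictScalars_apply, map_smul, hsingle]
  rfl

end AddMonoidAlgebra

namespace DirectSum

variable {ι R V W U : Type*} [DecidableEq ι] [Semiring R]
  [AddCommMonoid V] [Module R V] [AddCommMonoid W] [Module R W] [AddCommMonoid U] [Module R U]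
  (𝒱 : ι → Submodule R V) (𝒲 : ι → Submodule R W) (𝒰 : ι → Submodule R U)
  [Decomposition 𝒱] [Decomposition 𝒲] [Decomposition 𝒰]

theorem decompose_map_of_mapsTo {ψ : V →ₗ[R] W} {e : ι → ι} (he : Function.Injective e)
    (hψ : ∀ i, Set.MapsTo ψ (𝒱 i) (𝒲 (e i))) (v : V) (i : ι) :
    (decompose 𝒲 (ψ v) (e i) : W) = ψ (decompose 𝒱 v i) := by
  induction v using Decomposition.inductionOn 𝒱 with
  | zero => simp
  | @homogeneous j v =>
    by_cases hji : j = i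
    · subst hji
      rw [decompose_of_mem_same 𝒲 (hψ j v.2), decompose_coe, of_eq_same]
    · rw [decompose_of_mem_ne 𝒲 (hψ j v.2) (he.ne hji), decompose_coe,
        of_eq_of_ne _ _ _ (Ne.symm hji), ZeroMemClass.coe_zero, map_zero]
  | add v v' hv hv' => simp [decompose_add, hv, hv']

noncomputable def gradedPart (φ : V →ₗ[R] W) : V →ₗ[R] W :=
  toModule R ι W (fun i => (𝒲 i).subtype ∘ₗ component R ι (fun i => 𝒲 i) i ∘ₗ
    (decomposeLinearEquiv 𝒲).toLinearMap ∘ₗ φ ∘ₗ (𝒱 i).subtype) ∘ₗ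
    (decomposeLinearEquiv 𝒱).toLinearMap

variable {𝒱 𝒲 𝒰}

theorem gradedPart_apply_of_mem (φ : V →ₗ[R] W) {i : ι} {v : V} (hv : v ∈ 𝒱 i) :
    gradedPart 𝒱 𝒲 φ v = decompose 𝒲 (φ v) i := by
  lift v to 𝒱 i using hv
  simp only [gradedPart, LinearMap.comp_apply, LinearEquiv.coe_coe, decomposeLinearEquiv_apply_coe,
    toModule_lof]
  rfl

theorem mapsTo_gradedPart (φ : V →ₗ[R] W) (i : ι) :
    Set.MapsTo (gradedPart 𝒱 𝒲 φ) (𝒱 i) (𝒲 i) := fun v hv => by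
  rw [SetLike.mem_coe, gradedPart_apply_of_mem φ hv]
  exact (decompose 𝒲 (φ v) i).2

theorem gradedPart_id : gradedPart 𝒱 𝒱 (LinearMap.id) = LinearMap.id := by
  ext v
  induction v using Decomposition.inductionOn 𝒱 with
  | zero => simp
  | homogeneous v =>
    rw [gradedPart_apply_of_mem _ v.2, LinearMap.id_apply, decompose_coe, of_eq_same]
  | add v v' hv hv' => simp only [map_add, hv, hv']

theorem comp_gradedPart (φ : V →ₗ[R] W) {ψ : W →ₗ[R] U} (hψ : ∀ i, Set.MapsTo ψ (𝒲 i) (𝒰 i)) :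
    ψ ∘ₗ gradedPart 𝒱 𝒲 φ = gradedPart 𝒱 𝒰 (ψ ∘ₗ φ) := by
  ext v
  induction v using Decomposition.inductionOn 𝒱 with
  | zero => simp
  | homogeneous v =>
    rw [LinearMap.comp_apply, gradedPart_apply_of_mem _ v.2, gradedPart_apply_of_mem _ v.2,
      LinearMap.comp_apply]
    exact (decompose_map_of_mapsTo 𝒲 𝒰 (e := id) Function.injective_id hψ _ _).symm
  | add v v' hv hv' => simp only [map_add, hv, hv']

theorem gradedPart_comp_of_commute {φ : V →ₗ[R] W} {a : V →ₗ[R] V} {b : W →ₗ[R] W}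
    {e : ι → ι} (he : Function.Injective e) (ha : ∀ i, Set.MapsTo a (𝒱 i) (𝒱 (e i)))
    (hb : ∀ i, Set.MapsTo b (𝒲 i) (𝒲 (e i))) (hφ : φ ∘ₗ a = b ∘ₗ φ) :
    gradedPart 𝒱 𝒲 φ ∘ₗ a = b ∘ₗ gradedPart 𝒱 𝒲 φ := by
  ext v
  induction v using Decomposition.inductionOn 𝒱 with
  | zero => simp
  | @homogeneous i v =>
    rw [LinearMap.comp_apply, LinearMap.comp_apply, gradedPart_apply_of_mem _ (ha i v.2),
      gradedPart_apply_of_mem _ v.2, ← LinearMap.comp_apply φ, hφ, LinearMap.comp_apply,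
      decompose_map_of_mapsTo 𝒲 𝒲 he hb]
  | add v v' hv hv' => simp only [map_add, hv, hv']

end DirectSum

namespace LieModule

section Field

variable {K L M : Type*} [Field K] [LieRing L] [LieAlgebra K L] [LieRing.IsNilpotent L]
  [AddCommGroup M] [Module K M] [LieRingModule L M] [LieModule K L M]

theorem isInternal_weightSpace [DecidableEq (L → K)]
    (hM : Submodule.span K {m : M | ∃ χ : L → K, ∀ x, ⁅x, m⁆ = χ x • m} = ⊤) :
    DirectSum.IsInternal fun χ : L → K => (weightSpace M χ : Submodule K M) := by
  refine DirectSum.isInternal_submodule_of_iSupIndep_of_iSup_eq_top ?_ ?_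
  · refine ((LieSubmodule.iSupIndep_toSubmodule.2 (iSupIndep_genWeightSpace K L M)).mono
      fun χ => ?_)
    exact weightSpace_le_genWeightSpace M χ
  · rw [eq_top_iff, ← hM, Submodule.span_le]
    rintro m ⟨χ, hχ⟩
    exact Submodule.mem_iSup_of_mem χ ((mem_weightSpace χ m).2 hχ)

end Field

variable {R L M N : Type*} [CommRing R] [LieRing L] [LieAlgebra R L]
  [AddCommGroup M] [Module R M] [LieRingModule L M] [LieModule R L M]
  [AddCommGroup N] [Module R N] [LieRingModule L N] [LieModule R L N]

theorem lie_mem_weightSpace_add {H : LieSubalgebra R L} {x : L} {α χ : H → R}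
    (hx : ∀ a : H, ⁅(a : L), x⁆ = α a • x) {m : M} (hm : m ∈ weightSpace M χ) :
    ⁅x, m⁆ ∈ weightSpace M (χ + α) := by
  rw [mem_weightSpace] at hm ⊢
  intro a
  rw [LieSubalgebra.coe_bracket_of_module, leibniz_lie, hx a, ← LieSubalgebra.coe_bracket_of_module,
    hm a, smul_lie, lie_smul, Pi.add_apply, add_smul, add_comm]

theorem mapsTo_weightSpace {H : LieSubalgebra R L} (f : M →ₗ⁅R,L⁆ N) (χ : H → R) :
    Set.MapsTo f (weightSpace M χ) (weightSpace N χ) := fun m hm => by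
  rw [SetLike.mem_coe, mem_weightSpace] at hm ⊢
  intro a
  rw [LieSubalgebra.coe_bracket_of_module, ← f.map_lie, ← LieSubalgebra.coe_bracket_of_module,
    hm a, map_smul]

theorem map_lie_of_mapsTo_weightSpace
    (hM : Submodule.span R {m : M | ∃ χ : L → R, ∀ x, ⁅x, m⁆ = χ x • m} = ⊤)
    {ψ : M →ₗ[R] N} (hψ : ∀ χ : L → R, Set.MapsTo ψ (weightSpace M χ) (weightSpace N χ))
    (x : L) (m : M) : ψ ⁅x, m⁆ = ⁅x, ψ m⁆ := by
  have hm : m ∈ Submodule.span R {m : M | ∃ χ : L → R, ∀ x, ⁅x, m⁆ = χ x • m} :=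
    hM ▸ Submodule.mem_top
  induction hm using Submodule.span_induction with
  | mem m hm =>
    obtain ⟨χ, hχ⟩ := hm
    have hψm := hψ χ ((mem_weightSpace χ m).2 hχ)
    rw [SetLike.mem_coe, mem_weightSpace] at hψm
    rw [hχ x, hψm x, map_smul]
  | zero => simp
  | add m m' _ _ hm hm' => rw [lie_add, map_add, hm, hm', map_add, lie_add]
  | smul c m _ hm => rw [lie_smul, map_smul, hm, map_smul, lie_smul]

end LieModule

theorem LinearMap.map_lie_of_span_eq_top {R L M N : Type*} [CommRing R] [LieRing L]
    [LieAlgebra R L] [AddCommGroup M] [Module R M] [LieRingModule L M] [LieModule R L M]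
    [AddCommGroup N] [Module R N] [LieRingModule L N] [LieModule R L N]
    (σ : M →ₗ[R] N) {S : Set L} (hS : Submodule.span R S = ⊤)
    (hσ : ∀ x ∈ S, ∀ m, σ ⁅x, m⁆ = ⁅x, σ m⁆) (x : L) (m : M) : σ ⁅x, m⁆ = ⁅x, σ m⁆ := by
  have hx : x ∈ Submodule.span R S := hS ▸ Submodule.mem_top
  induction hx using Submodule.span_induction with
  | mem x hx => exact hσ x hx m
  | zero => simp
  | add x y _ _ hx hy => rw [add_lie, map_add, hx, hy, add_lie]
  | smul c x _ hx => rw [smul_lie, map_smul, hx, smul_lie]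

theorem LieModule.commute_toEnd_of_lie_eq_zero {R L M : Type*} [CommRing R] [LieRing L]
    [LieAlgebra R L] [AddCommGroup M] [Module R M] [LieRingModule L M] [LieModule R L M]
    {x y : L} (hxy : ⁅x, y⁆ = 0) : Commute (toEnd R L M x) (toEnd R L M y) :=
  LinearMap.ext fun m => sub_eq_zero.1 <| (lie_lie x y m).symm.trans <| by rw [hxy, zero_lie]

open DirectSum in
theorem LieModule.exists_lieModuleHom_rightInverse {K L M N : Type*} [Field K] [LieRing L]
    [LieAlgebra K L] [AddCommGroup M] [Module K M] [LieRingModule L M] [LieModule K L M]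
    [AddCommGroup N] [Module K N] [LieRingModule L N] [LieModule K L N]
    {H : LieSubalgebra K L} [LieRing.IsNilpotent H] {ι : Type*} {X : ι → L} {α : ι → H → K}
    (hα : ∀ i (a : H), ⁅(a : L), X i⁆ = α i a • X i)
    (hspan : H.toSubmodule ⊔ Submodule.span K (Set.range X) = ⊤)
    (hM : Submodule.span K {m : M | ∃ χ : H → K, ∀ a : H, ⁅(a : L), m⁆ = χ a • m} = ⊤)
    (hN : Submodule.span K {n : N | ∃ χ : H → K, ∀ a : H, ⁅(a : L), n⁆ = χ a • n} = ⊤)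
    (g : N →ₗ⁅K,L⁆ M) (σ₀ : M →ₗ[K] N) (hgσ₀ : (g : N →ₗ[K] M) ∘ₗ σ₀ = LinearMap.id)
    (hσ₀ : ∀ i m, σ₀ ⁅X i, m⁆ = ⁅X i, σ₀ m⁆) :
    ∃ σ : M →ₗ⁅K,L⁆ N, ∀ m, g (σ m) = m := by
  classical
  let _ := (isInternal_weightSpace hM).chooseDecomposition
  let _ := (isInternal_weightSpace hN).chooseDecomposition
  let σ := gradedPart (fun χ : H → K => (weightSpace M χ : Submodule K M))
    (fun χ : H → K => (weightSpace N χ : Submodule K N)) σ₀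
  have hgσ : (g : N →ₗ[K] M) ∘ₗ σ = LinearMap.id := by
    rw [comp_gradedPart _ (mapsTo_weightSpace g), hgσ₀, gradedPart_id]
  have hσX : ∀ i, σ ∘ₗ toEnd K L M (X i) = toEnd K L N (X i) ∘ₗ σ := fun i =>
    gradedPart_comp_of_commute (add_left_injective (α i))
      (fun _ _ hm => lie_mem_weightSpace_add (hα i) hm)
      (fun _ _ hm => lie_mem_weightSpace_add (hα i) hm) (LinearMap.ext (hσ₀ i))
  have hσH : ∀ (a : H) (m : M), σ ⁅a, m⁆ = ⁅a, σ m⁆ :=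
    map_lie_of_mapsTo_weightSpace hM (mapsTo_gradedPart σ₀)
  have hspan' : Submodule.span K ((H : Set L) ∪ Set.range X) = ⊤ := by
    rw [Submodule.span_union, ← hspan]
    exact congrArg (· ⊔ _) (Submodule.span_eq H.toSubmodule)
  have hσ := σ.map_lie_of_span_eq_top hspan' <| by
    rintro x (hx | ⟨i, rfl⟩) m
    · exact hσH ⟨x, hx⟩ m
    · exact congrArg (· m) (hσX i)
  exact ⟨{ σ with map_lie' := hσ _ _ }, fun m => congrArg (· m) hgσ⟩

open LieModule

theorem self_extension_splits_general
    (s : Type*) [LieRing s] [LieAlgebra ℂ s]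
    (h : LieSubalgebra ℂ s) (habelian : IsLieAbelian h)
    (n : ℕ) (X : Fin n → s)
    (hdecomp : h.toSubmodule ⊔ Submodule.span ℂ (Set.range X) = ⊤)
    (heig : ∀ i, ∃ α : h → ℂ, ∀ a : h, ⁅(a : s), X i⁆ = α a • X i)
    (hcomm : ∀ i j, ⁅X i, X j⁆ = 0)
    (M : Type*) [AddCommGroup M] [Module ℂ M] [LieRingModule s M] [LieModule ℂ s M]
    (hwt : Submodule.span ℂ
      {m : M | ∃ χ : h → ℂ, ∀ a : h, ⁅(a : s), m⁆ = χ a • m} = ⊤)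
    (hbij : ∀ i, Function.Bijective (fun m : M => ⁅X i, m⁆))
    [Module (AddMonoidAlgebra ℂ (Fin n →₀ ℤ)) M]
    [IsScalarTower ℂ (AddMonoidAlgebra ℂ (Fin n →₀ ℤ)) M]
    (hcompat : ∀ (i : Fin n) (m : M),
      (AddMonoidAlgebra.single (Finsupp.single i (1 : ℤ)) (1 : ℂ)) • m = ⁅X i, m⁆)
    [Module.Free (AddMonoidAlgebra ℂ (Fin n →₀ ℤ)) M] :
    ∀ (M' : Type*) (_ : AddCommGroup M') (_ : Module ℂ M') (_ : LieRingModule s M')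
      (_ : LieModule ℂ s M'),
      (Submodule.span ℂ {m : M' | ∃ χ : h → ℂ, ∀ a : h, ⁅(a : s), m⁆ = χ a • m} = ⊤) →
      ∀ (f : M →ₗ⁅ℂ,s⁆ M') (g : M' →ₗ⁅ℂ,s⁆ M),
        Function.Injective f → Function.Surjective g →
        (∀ x : M', g x = 0 ↔ ∃ m : M, f m = x) →
        ∃ σ : M →ₗ⁅ℂ,s⁆ M', ∀ m : M, g (σ m) = m := by
  intro M' _ _ _ _ hwt' f g hf hg hfg
  choose α hα using heig
  have hXM' : ∀ i, Function.Bijective (toEnd ℂ s M' (X i)) := fun i =>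
    LinearMap.bijective_of_shortExact (f := (f : M →ₗ[ℂ] M')) (g := (g : M' →ₗ[ℂ] M)) hf hg hfg
      (a := toEnd ℂ s M (X i)) (c := toEnd ℂ s M (X i))
      (LinearMap.ext fun m => f.map_lie _ _) (LinearMap.ext fun u => g.map_lie _ _)
      (hbij i) (hbij i)
  let u i := ((Module.End.isUnit_iff _).2 (hXM' i)).unit
  obtain ⟨σ₀, hgσ₀, hσ₀X⟩ := AddMonoidAlgebra.exists_rightInverse_commute_of_projective u
    (fun i j => Commute.units_val_iff.1 (commute_toEnd_of_lie_eq_zero (hcomm i j)))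
    (g : M' →ₗ[ℂ] M) hg (fun i w => by rw [hcompat, IsUnit.unit_spec]; exact g.map_lie _ _)
  exact exists_lieModuleHom_rightInverse hα hdecomp hwt hwt' g σ₀ hgσ₀ fun i m =>
    (congrArg σ₀ (hcompat i m)).symm.trans (hσ₀X i m)

/-- Let `s = h ⊕ g₁`, where `h` is abelian and `g₁ = span(X₁,…,Xₙ)` is an
abelian ideal consisting of `ad h`-eigenvectors.  Let `M` be a weight `s`-module on which every
`Xᵢ` acts bijectively and which is free as a module over the Laurent polynomial ring
`ℂ[X₁^{±1},…,Xₙ^{±1}]` (encoded as the monoid algebra of `Fin n →₀ ℤ`, acting compatibly).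
Then every short exact sequence of weight `s`-modules `0 → M → M' → M → 0` splits, i.e.
`Ext¹_{(s,h)}(M,M) = 0`. -/
theorem self_extension_splits
    (s : Type*) [LieRing s] [LieAlgebra ℂ s]
    (h : LieSubalgebra ℂ s) (habelian : IsLieAbelian h)
    (n : ℕ) (X : Fin n → s)
    (hdecomp : h.toSubmodule ⊔ Submodule.span ℂ (Set.range X) = ⊤)
    (heig : ∀ i, ∃ α : h → ℂ, ∀ a : h, ⁅(a : s), X i⁆ = α a • X i)
    (hcomm : ∀ i j, ⁅X i, X j⁆ = 0)
    (hideal : ∀ a : s, ∀ i, ⁅a, X i⁆ ∈ Submodule.span ℂ (Set.range X))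
    (M : Type*) [AddCommGroup M] [Module ℂ M] [LieRingModule s M] [LieModule ℂ s M]
    (hwt : Submodule.span ℂ
      {m : M | ∃ χ : h → ℂ, ∀ a : h, ⁅(a : s), m⁆ = χ a • m} = ⊤)
    (hbij : ∀ i, Function.Bijective (fun m : M => ⁅X i, m⁆))
    [Module (AddMonoidAlgebra ℂ (Fin n →₀ ℤ)) M]
    [IsScalarTower ℂ (AddMonoidAlgebra ℂ (Fin n →₀ ℤ)) M]
    (hcompat : ∀ (i : Fin n) (m : M),
      (AddMonoidAlgebra.single (Finsupp.single i (1 : ℤ)) (1 : ℂ)) • m = ⁅X i, m⁆)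
    [Module.Free (AddMonoidAlgebra ℂ (Fin n →₀ ℤ)) M] :
    ∀ (M' : Type*) (_ : AddCommGroup M') (_ : Module ℂ M') (_ : LieRingModule s M')
      (_ : LieModule ℂ s M'),
      (Submodule.span ℂ {m : M' | ∃ χ : h → ℂ, ∀ a : h, ⁅(a : s), m⁆ = χ a • m} = ⊤) →
      ∀ (f : M →ₗ⁅ℂ,s⁆ M') (g : M' →ₗ⁅ℂ,s⁆ M),
        Function.Injective f → Function.Surjective g →
        (∀ x : M', g x = 0 ↔ ∃ m : M, f m = x) →
        ∃ σ : M →ₗ⁅ℂ,s⁆ M', ∀ m : M, g (σ m) = m :=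
  self_extension_splits_general s h habelian n X hdecomp heig hcomm M hwt hbij hcompat
end

section
/- Let g = sl(n+1,ℂ) act on F_μ = {f ∈ t^μ ℂ[t₀^{±1},...,t_n^{±1}] : Ef = |μ|f} via E_{ij} ↦ t_i ∂/∂t_j, where E = Σ t_i ∂/∂t_i and |μ| = μ₀+...+μ_n. Suppose an h-equivariant map c : g → End(F_μ) is defined by c(E_{ii} − E_{jj}) = 0 and c(E_{ij}) = b_{ij}·(t_i/t_j) (multiplication operator) for i ≠ j, with constants b_{ij} ∈ ℂ. Then c is a 1-cocycle (i.e. satisfies c([g₁,g₂]) = [g₁,c(g₂)] − [g₂,c(g₁)]) if and only if all b_{ij} are equal to a single constant b. -/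
/-! The cuspidal `gl(n+1)`-module `F_μ = {f ∈ t^μ ℂ[t₀^{±1},…,t_n^{±1}] : Ef = |μ|f}`,
realized on `ExpLat m →₀ ℂ` (coefficients with respect to the monomial basis
`t^{μ+d}`, `d` in the root lattice `{d : Fin m → ℤ | ∑ d = 0}`), with `E_{ij} ↦ t_i ∂/∂t_j`. -/

/-- Exponent shifts: `{d : Fin m → ℤ // ∑ i, d i = 0}`. -/
def ExpLat (m : ℕ) : Type := {d : Fin m → ℤ // ∑ i, d i = 0}

/-- The indicator `δᵢ`. -/
def delta (m : ℕ) (i : Fin m) : Fin m → ℤ := fun k => if k = i then 1 else 0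

lemma sum_delta (m : ℕ) (i : Fin m) : ∑ k, delta m i k = 1 := by
  simp [delta]

/-- Addition of `δᵢ - δⱼ` as a bijection of the exponent lattice
(multiplication by `t_i/t_j` on monomials). -/
def shiftE (m : ℕ) (i j : Fin m) : ExpLat m ≃ ExpLat m where
  toFun d := ⟨fun k => d.1 k + delta m i k - delta m j k, by
    rw [Finset.sum_sub_distrib, Finset.sum_add_distrib, d.2, sum_delta, sum_delta]; ring⟩
  invFun d := ⟨fun k => d.1 k - delta m i k + delta m j k, by
    rw [Finset.sum_add_distrib, Finset.sum_sub_distrib, d.2, sum_delta, sum_delta]; ring⟩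
  left_inv d := by apply Subtype.ext; funext k; ring
  right_inv d := by apply Subtype.ext; funext k; ring

/-- The action of `E_{ij} = t_i ∂/∂t_j` on `F_μ`: on basis monomials,
`E_{ij} · t^{μ+d} = (μ_j + d_j) t^{μ+d+δᵢ-δⱼ}`. -/
noncomputable def Eop (m : ℕ) (μ : Fin m → ℂ) (i j : Fin m) :
    Module.End ℂ (ExpLat m →₀ ℂ) :=
  Finsupp.lsum ℂ fun d => LinearMap.toSpanSingleton ℂ _
    ((μ j + (d.1 j : ℂ)) • Finsupp.single (shiftE m i j d) (1 : ℂ))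

/-- Multiplication by `t_i/t_j` on `F_μ`. -/
noncomputable def Tmul (m : ℕ) (i j : Fin m) : Module.End ℂ (ExpLat m →₀ ℂ) :=
  Finsupp.lsum ℂ fun d => LinearMap.toSpanSingleton ℂ _
    (Finsupp.single (shiftE m i j d) (1 : ℂ))

/-! On monomials `E_{ij}` acts as `(μ_j + d_j) · (t_i/t_j)`, and multiplication by `t_k/t_l`
shifts the exponent of `t_j` by `δ_{jk} - δ_{jl}`, so
`[E_{ij}, t_k/t_l] = (δ_{jk} - δ_{jl}) (t_i/t_j)(t_k/t_l)`. Hence on a pair of matrix units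
both sides of the cocycle identity are scalar multiples of the invertible operator
`(t_i/t_j)(t_k/t_l)`, and the identity becomes a linear relation among the `b`'s. The pairs
`(E_{ij}, E_{ji})` make `b` symmetric and the pairs `(E_{ij}, E_{jk})` give `b_{ik} = b_{jk}`,
which together force all `b_{ij}` to be equal. Conversely a constant `b` satisfies every
relation, and an identity bilinear in `(A, B)` that holds on a basis holds everywhere. -/

open Matrix

theorem cocycle_of_basis {R L A ι : Type*} [CommRing R] [Ring L] [Module R L]
    [IsScalarTower R L L] [SMulCommClass R L L] [Ring A] [Module R A] [IsScalarTower R A A]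
    [SMulCommClass R A A] (e : Module.Basis ι R L) (ρ c : L →ₗ[R] A)
    (h : ∀ i j, c ⁅e i, e j⁆ = ⁅ρ (e i), c (e j)⁆ - ⁅ρ (e j), c (e i)⁆) (x y : L) :
    c ⁅x, y⁆ = ⁅ρ x, c y⁆ - ⁅ρ y, c x⁆ := by
  let F : L →ₗ[R] L →ₗ[R] A :=
    LinearMap.mk₂ R (fun x y => c ⁅x, y⁆ - (⁅ρ x, c y⁆ - ⁅ρ y, c x⁆))
      (fun x x' y => by simp only [Ring.lie_def, add_mul, mul_add, map_add, map_sub]; abel)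
      (fun r x y => by
        simp only [Ring.lie_def, smul_mul_assoc, mul_smul_comm, map_smul, map_sub, smul_sub])
      (fun x y y' => by simp only [Ring.lie_def, add_mul, mul_add, map_add, map_sub]; abel)
      (fun r x y => by
        simp only [Ring.lie_def, smul_mul_assoc, mul_smul_comm, map_smul, map_sub, smul_sub])
  have hF : F = 0 := e.ext fun i => e.ext fun j => by simp [F, h]
  exact sub_eq_zero.mp (LinearMap.congr_fun₂ hF x y)

section ShiftOperators

variable {m : ℕ}

instance : Nonempty (ExpLat m) := ⟨⟨0, by simp⟩⟩

lemma shiftE_apply (i j : Fin m) (d : ExpLat m) (x : Fin m) :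
    (shiftE m i j d).1 x = d.1 x + delta m i x - delta m j x := rfl

lemma shiftE_shiftE_comm (i j k l : Fin m) (d : ExpLat m) :
    shiftE m i j (shiftE m k l d) = shiftE m k l (shiftE m i j d) :=
  Subtype.ext <| funext fun x => by simp only [shiftE_apply]; ring

lemma shiftE_shiftE (i j l : Fin m) (d : ExpLat m) :
    shiftE m i j (shiftE m j l d) = shiftE m i l d :=
  Subtype.ext <| funext fun x => by simp only [shiftE_apply]; ring

lemma shiftE_self (i : Fin m) (d : ExpLat m) : shiftE m i i d = d :=
  Subtype.ext <| funext fun x => by simp only [shiftE_apply]; ring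

lemma Tmul_single (i j : Fin m) (d : ExpLat m) (a : ℂ) :
    Tmul m i j (Finsupp.single d a) = Finsupp.single (shiftE m i j d) a := by
  rw [Tmul, Finsupp.lsum_single, LinearMap.toSpanSingleton_apply, Finsupp.smul_single,
    smul_eq_mul, mul_one]

lemma Eop_single (μ : Fin m → ℂ) (i j : Fin m) (d : ExpLat m) (a : ℂ) :
    Eop m μ i j (Finsupp.single d a) =
      (μ j + (d.1 j : ℂ)) • Finsupp.single (shiftE m i j d) a := by
  rw [Eop, Finsupp.lsum_single, LinearMap.toSpanSingleton_apply, smul_comm,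
    Finsupp.smul_single, smul_eq_mul, mul_one]

lemma Tmul_commute (i j k l : Fin m) : Commute (Tmul m i j) (Tmul m k l) :=
  Finsupp.lhom_ext fun d a => by
    simp only [Module.End.mul_apply, Tmul_single, shiftE_shiftE_comm]

lemma Tmul_mul_Tmul (i j l : Fin m) : Tmul m i j * Tmul m j l = Tmul m i l :=
  Finsupp.lhom_ext fun d a => by simp only [Module.End.mul_apply, Tmul_single, shiftE_shiftE]

lemma Tmul_self (i : Fin m) : Tmul m i i = 1 :=
  Finsupp.lhom_ext fun d a => by simp only [Tmul_single, shiftE_self, Module.End.one_apply]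

lemma isUnit_Tmul (i j : Fin m) : IsUnit (Tmul m i j) :=
  isUnit_iff_exists.2
    ⟨Tmul m j i, by rw [Tmul_mul_Tmul, Tmul_self], by rw [Tmul_mul_Tmul, Tmul_self]⟩

lemma lie_Eop_Tmul (μ : Fin m → ℂ) (i j k l : Fin m) :
    ⁅Eop m μ i j, Tmul m k l⁆ =
      (((if j = k then 1 else 0) : ℂ) - if j = l then 1 else 0) • (Tmul m i j * Tmul m k l) := by
  rw [Ring.lie_def]
  refine Finsupp.lhom_ext fun d a => ?_
  simp only [LinearMap.sub_apply, Module.End.mul_apply, LinearMap.smul_apply, map_smul,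
    Tmul_single, Eop_single, shiftE_shiftE_comm i j k l d, shiftE_apply]
  rw [← sub_smul]
  congr 1
  push_cast [delta]
  split_ifs <;> ring

end ShiftOperators

lemma offDiag_eq_of_symm_of_col_eq {α R : Type*} {b : α → α → R}
    (hsymm : ∀ i j, i ≠ j → b i j = b j i)
    (hcol : ∀ i j k, i ≠ j → j ≠ k → i ≠ k → b i k = b j k) {i j k l : α} (hij : i ≠ j)
    (hkl : k ≠ l) : b i j = b k l := by
  have hcol' : ∀ i j k, i ≠ k → j ≠ k → b i k = b j k := fun i j k hik hjk => by
    rcases eq_or_ne i j with rfl | hij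
    · rfl
    · exact hcol i j k hij hjk hik
  have hrow : ∀ i j k, i ≠ j → i ≠ k → b i j = b i k := fun i j k hij hik =>
    calc b i j = b j i := hsymm i j hij
      _ = b k i := hcol' j k i hij.symm hik.symm
      _ = b i k := (hsymm i k hik).symm
  rcases eq_or_ne j k with rfl | hjk
  · exact (hsymm i j hij).trans (hrow j i l hij.symm hkl)
  · exact (hcol' i k j hij hjk.symm).trans (hrow k j l hjk.symm hkl)

section CoefficientIdentity

variable {α R : Type*} [DecidableEq α] [CommRing R]

/-- The cocycle identity on `(E_{ij}, E_{kl})` for `c(E_{pq}) = b_{pq} • (t_p/t_q)`, read off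
as an identity between the coefficients of `(t_i/t_j)(t_k/t_l)`. -/
def CocycleCoeffEq (b : α → α → R) (i j k l : α) : Prop :=
  (if j = k then b i l else 0) - (if l = i then b k j else 0) =
    b k l * ((if j = k then 1 else 0) - if j = l then 1 else 0) -
      b i j * ((if l = i then 1 else 0) - if l = j then 1 else 0)

lemma CocycleCoeffEq.symm_of_diag {b : α → α → R} (hdiag : ∀ i, b i i = 0) {i j : α}
    (hij : i ≠ j) (h : CocycleCoeffEq b i j j i) : b i j = b j i := by
  simp only [CocycleCoeffEq, ↓reduceIte, if_neg hij, if_neg hij.symm, hdiag] at h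
  linear_combination h

lemma CocycleCoeffEq.eq_of_ne {b : α → α → R} {i j k : α} (hjk : j ≠ k) (hik : i ≠ k)
    (h : CocycleCoeffEq b i j j k) : b i k = b j k := by
  simp only [CocycleCoeffEq, ↓reduceIte, if_neg hjk, if_neg hik.symm, if_neg hjk.symm] at h
  linear_combination h

lemma cocycleCoeffEq_const (β : R) (i j k l : α) :
    CocycleCoeffEq (fun p q => if p = q then 0 else β) i j k l := by
  unfold CocycleCoeffEq
  split_ifs <;> grind

lemma exists_offDiag_eq_of_cocycleCoeffEq {b : α → α → R} (hdiag : ∀ i, b i i = 0)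
    (h : ∀ i j k l, i ≠ j → k ≠ l → CocycleCoeffEq b i j k l) :
    ∃ β, ∀ i j, i ≠ j → b i j = β := by
  rcases em (∃ k l : α, k ≠ l) with ⟨k, l, hkl⟩ | hne
  · refine ⟨b k l, fun i j hij => offDiag_eq_of_symm_of_col_eq ?_ ?_ hij hkl⟩
    · exact fun i j hij => (h i j j i hij hij.symm).symm_of_diag hdiag hij
    · exact fun i j k hij hjk hik => (h i j j k hij hjk).eq_of_ne hjk hik
  · exact ⟨0, fun i j hij => (hne ⟨i, j, hij⟩).elim⟩

end CoefficientIdentity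

section MonomialCocycle

variable {m : ℕ} {μ : Fin m → ℂ} {b : Fin m → Fin m → ℂ}
  {ρ c : Matrix (Fin m) (Fin m) ℂ →ₗ[ℂ] Module.End ℂ (ExpLat m →₀ ℂ)}

lemma map_single_mul_single (hc : ∀ i j, c (single i j 1) = b i j • Tmul m i j)
    (i j k l : Fin m) :
    c (single i j (1 : ℂ) * single k l 1) =
      (if j = k then b i l else 0) • (Tmul m i j * Tmul m k l) := by
  split_ifs with hjk
  · rw [hjk, single_mul_single_same, one_mul, hc, Tmul_mul_Tmul]
  · rw [single_mul_single_of_ne (h := hjk), map_zero, zero_smul]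

lemma map_lie_single (hc : ∀ i j, c (single i j 1) = b i j • Tmul m i j) (i j k l : Fin m) :
    c ⁅single i j (1 : ℂ), single k l 1⁆ =
      ((if j = k then b i l else 0) - if l = i then b k j else 0) • (Tmul m i j * Tmul m k l) := by
  rw [Ring.lie_def, map_sub, map_single_mul_single hc, map_single_mul_single hc,
    (Tmul_commute k l i j).eq]
  module

lemma lie_map_single (hρ : ∀ i j, ρ (single i j 1) = Eop m μ i j)
    (hc : ∀ i j, c (single i j 1) = b i j • Tmul m i j) (i j k l : Fin m) :
    ⁅ρ (single i j 1), c (single k l 1)⁆ =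
      (b k l * ((if j = k then 1 else 0) - if j = l then 1 else 0)) •
        (Tmul m i j * Tmul m k l) := by
  have h := lie_Eop_Tmul μ i j k l
  rw [Ring.lie_def] at h
  rw [hρ, hc, Ring.lie_def, mul_smul_comm, smul_mul_assoc, ← smul_smul, ← h]
  module

lemma cocycle_single_iff (hρ : ∀ i j, ρ (single i j 1) = Eop m μ i j)
    (hc : ∀ i j, c (single i j 1) = b i j • Tmul m i j) (i j k l : Fin m) :
    c ⁅single i j (1 : ℂ), single k l 1⁆ =
        ⁅ρ (single i j 1), c (single k l 1)⁆ - ⁅ρ (single k l 1), c (single i j 1)⁆ ↔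
      CocycleCoeffEq b i j k l := by
  have hP := ((isUnit_Tmul i j).mul (isUnit_Tmul k l)).ne_zero
  rw [map_lie_single hc, lie_map_single hρ hc, lie_map_single hρ hc, (Tmul_commute k l i j).eq,
    ← sub_smul (M := Module.End ℂ (ExpLat m →₀ ℂ)),
    (smul_left_injective ℂ (M := Module.End ℂ (ExpLat m →₀ ℂ)) hP).eq_iff, CocycleCoeffEq]

end MonomialCocycle

theorem cocycle_iff_constants_equal_general
    (n : ℕ) (μ : Fin (n + 1) → ℂ)
    (b : Fin (n + 1) → Fin (n + 1) → ℂ)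
    (ρ c : Matrix (Fin (n + 1)) (Fin (n + 1)) ℂ →ₗ[ℂ] Module.End ℂ (ExpLat (n + 1) →₀ ℂ))
    (hρ : ∀ i j, ρ (Matrix.single i j 1) = Eop (n + 1) μ i j)
    (hcdiag : ∀ i, c (Matrix.single i i 1) = 0)
    (hcoff : ∀ i j, i ≠ j → c (Matrix.single i j 1) = b i j • Tmul (n + 1) i j) :
    (∀ A B : Matrix (Fin (n + 1)) (Fin (n + 1)) ℂ, A.trace = 0 → B.trace = 0 →
        c ⁅A, B⁆ = ⁅ρ A, c B⁆ - ⁅ρ B, c A⁆) ↔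
      ∃ β : ℂ, ∀ i j, i ≠ j → b i j = β := by
  set b₀ : Fin (n + 1) → Fin (n + 1) → ℂ := fun i j => if i = j then 0 else b i j
  have hc : ∀ i j, c (single i j 1) = b₀ i j • Tmul (n + 1) i j := fun i j => by
    rcases eq_or_ne i j with rfl | hij
    · simp [b₀, hcdiag]
    · simp [b₀, hij, hcoff i j hij]
  constructor
  · intro H
    obtain ⟨β, hβ⟩ := exists_offDiag_eq_of_cocycleCoeffEq (b := b₀) (by simp [b₀])
      fun i j k l hij hkl => (cocycle_single_iff hρ hc i j k l).1
        (H _ _ (trace_single_eq_of_ne _ _ _ hij) (trace_single_eq_of_ne _ _ _ hkl))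
    exact ⟨β, fun i j hij => by simpa [b₀, hij] using hβ i j hij⟩
  · rintro ⟨β, hβ⟩ A B - -
    have hb₀ : b₀ = fun i j => if i = j then 0 else β := by
      funext i j
      rcases eq_or_ne i j with rfl | hij <;> simp [b₀, *]
    refine cocycle_of_basis (A := Module.End ℂ (ExpLat (n + 1) →₀ ℂ)) (stdBasis ℂ _ _) ρ c
      (fun ⟨i, j⟩ ⟨k, l⟩ => ?_) A B
    simp only [stdBasis_eq_single]
    exact (cocycle_single_iff hρ hc i j k l).2 (hb₀ ▸ cocycleCoeffEq_const β i j k l)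

/-- Let `g = sl(n+1,ℂ)` act on the cuspidal module `F_μ` via
`E_{ij} ↦ t_i ∂/∂t_j`.  The `h`-equivariant map `c` defined by `c(E_{ii} − E_{jj}) = 0` and
`c(E_{ij}) = b_{ij}·(t_i/t_j)` for `i ≠ j` is a 1-cocycle — i.e.
`c([A,B]) = [ρ(A), c(B)] − [ρ(B), c(A)]` for all `A, B ∈ sl(n+1)` — if and only if all the
constants `b_{ij}` are equal. -/
theorem cocycle_iff_constants_equal
    (n : ℕ) (hn : 1 ≤ n) (μ : Fin (n + 1) → ℂ)
    (hμ : ∀ i, ∀ z : ℤ, μ i ≠ z)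
    (b : Fin (n + 1) → Fin (n + 1) → ℂ)
    (ρ c : Matrix (Fin (n + 1)) (Fin (n + 1)) ℂ →ₗ[ℂ] Module.End ℂ (ExpLat (n + 1) →₀ ℂ))
    (hρ : ∀ i j, ρ (Matrix.single i j 1) = Eop (n + 1) μ i j)
    (hcdiag : ∀ i, c (Matrix.single i i 1) = 0)
    (hcoff : ∀ i j, i ≠ j → c (Matrix.single i j 1) = b i j • Tmul (n + 1) i j) :
    (∀ A B : Matrix (Fin (n + 1)) (Fin (n + 1)) ℂ, A.trace = 0 → B.trace = 0 →
        c ⁅A, B⁆ = ⁅ρ A, c B⁆ - ⁅ρ B, c A⁆) ↔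
      ∃ β : ℂ, ∀ i j, i ≠ j → b i j = β :=
  cocycle_iff_constants_equal_general n μ b ρ c hρ hcdiag hcoff
end

section
/- Let g = sl(2,ℂ) act on F_μ ⊕ u·F_μ where u = log(t₀t₁), via the vector-field action E_{ij} ↦ t_i ∂/∂t_j (so E_{ij}(uf) = u·E_{ij}f + (t_i/t_j)f). Then the Casimir operator Ω = E₀₁E₁₀ + E₁₀E₀₁ + (E₀₀−E₁₁)²/2 acts on u·f by Ω(uf) = u·Ω(f) + 2(1+|μ|)f for all f ∈ F_μ. In particular, if |μ| ≠ −1 the self-extension 0 → F_μ → F_μ ⊕ uF_μ → F_μ → 0 does not split. -/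
/-- Multiplication by `t₀/t₁` on `F_μ`. -/
noncomputable def TX : Module.End ℂ (ℤ → ℂ) where
  toFun f := fun k => f (k - 1)
  map_add' f g := by funext k; simp
  map_smul' c f := by funext k; simp

/-- Multiplication by `t₁/t₀` on `F_μ`. -/
noncomputable def TY : Module.End ℂ (ℤ → ℂ) where
  toFun f := fun k => f (k + 1)
  map_add' f g := by funext k; simp
  map_smul' c f := by funext k; simp

/-- The action of `X` on `N = F_μ ⊕ u·F_μ`:  `X(f + u g) = X f + (t₀/t₁) g + u·X g`. -/
noncomputable def XN (μ₁ : ℂ) : Module.End ℂ ((ℤ → ℂ) × (ℤ → ℂ)) :=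
  (((Xop μ₁).comp (LinearMap.fst ℂ _ _) + TX.comp (LinearMap.snd ℂ _ _)).prod
    ((Xop μ₁).comp (LinearMap.snd ℂ _ _)))

/-- The action of `Y` on `N`. -/
noncomputable def YN (μ₀ : ℂ) : Module.End ℂ ((ℤ → ℂ) × (ℤ → ℂ)) :=
  (((Yop μ₀).comp (LinearMap.fst ℂ _ _) + TY.comp (LinearMap.snd ℂ _ _)).prod
    ((Yop μ₀).comp (LinearMap.snd ℂ _ _)))

/-- The action of `H` on `N` (note `H(u) = 0`). -/
noncomputable def HN (μ₀ μ₁ : ℂ) : Module.End ℂ ((ℤ → ℂ) × (ℤ → ℂ)) :=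
  ((Hop μ₀ μ₁).comp (LinearMap.fst ℂ _ _)).prod ((Hop μ₀ μ₁).comp (LinearMap.snd ℂ _ _))

/-- The Casimir operator `Ω = E₀₁E₁₀ + E₁₀E₀₁ + (E₀₀−E₁₁)²/2` on `N`. -/
noncomputable def CasimirN (μ₀ μ₁ : ℂ) : Module.End ℂ ((ℤ → ℂ) × (ℤ → ℂ)) :=
  XN μ₁ * YN μ₀ + YN μ₀ * XN μ₁ + (2 : ℂ)⁻¹ • (HN μ₀ μ₁ * HN μ₀ μ₁)

/-- The Casimir operator on `F_μ`. -/
noncomputable def Casimir0 (μ₀ μ₁ : ℂ) : Module.End ℂ (ℤ → ℂ) :=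
  Xop μ₁ * Yop μ₀ + Yop μ₀ * Xop μ₁ + (2 : ℂ)⁻¹ • (Hop μ₀ μ₁ * Hop μ₀ μ₁)

/-! On `F_μ` the Casimir operator is the scalar `|μ|(|μ| + 2)/2`. On `N` the only new terms of
`Ω(u f)` come from the summands of `E₀₁E₁₀ + E₁₀E₀₁` in which one factor hits `u`; they add up to
`(E₀₁ (t₁/t₀) + (t₀/t₁) E₁₀ + E₁₀ (t₀/t₁) + (t₁/t₀) E₀₁) f = 2(1 + |μ|) f`, so `Ω` acts on `N` by a
nontrivial Jordan block when `|μ| ≠ -1`. An `sl(2)`-equivariant section of `N → F_μ` would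
commute with `Ω`, which forces that off-diagonal term to vanish. -/

lemma casimir0_apply (μ₀ μ₁ : ℂ) (f : ℤ → ℂ) :
    Casimir0 μ₀ μ₁ f = ((μ₀ + μ₁) + (μ₀ + μ₁) ^ 2 / 2) • f := by
  funext k
  simp only [Casimir0, Xop, Yop, Hop, LinearMap.add_apply, Module.End.mul_apply,
    LinearMap.smul_apply, LinearMap.coe_mk, AddHom.coe_mk, Pi.add_apply, Pi.smul_apply,
    smul_eq_mul]
  push_cast
  ring

lemma casimirN_apply (μ₀ μ₁ : ℂ) (g f : ℤ → ℂ) :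
    CasimirN μ₀ μ₁ (g, f) =
      (Casimir0 μ₀ μ₁ g + (2 * (1 + (μ₀ + μ₁))) • f, Casimir0 μ₀ μ₁ f) := by
  ext k
  · simp only [CasimirN, Casimir0, XN, YN, HN, Xop, Yop, Hop, TX, TY,
      LinearMap.add_apply, Module.End.mul_apply, LinearMap.smul_apply,
      LinearMap.prod_apply, LinearMap.comp_apply, LinearMap.fst_apply,
      LinearMap.snd_apply, Function.prod, LinearMap.coe_mk, AddHom.coe_mk,
      Prod.fst_add, Prod.smul_fst, Pi.add_apply, Pi.smul_apply, smul_eq_mul]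
    push_cast
    ring
  · rfl

lemma casimirN_comp_of_equivariant (μ₀ μ₁ : ℂ) (s : (ℤ → ℂ) →ₗ[ℂ] ((ℤ → ℂ) × (ℤ → ℂ)))
    (hX : ∀ f, s (Xop μ₁ f) = XN μ₁ (s f)) (hY : ∀ f, s (Yop μ₀ f) = YN μ₀ (s f))
    (hH : ∀ f, s (Hop μ₀ μ₁ f) = HN μ₀ μ₁ (s f)) (f : ℤ → ℂ) :
    s (Casimir0 μ₀ μ₁ f) = CasimirN μ₀ μ₁ (s f) := by
  simp only [Casimir0, CasimirN, LinearMap.add_apply, Module.End.mul_apply,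
    LinearMap.smul_apply, map_add, map_smul, hX, hY, hH]

lemma smul_eq_zero_of_casimir_section (μ₀ μ₁ : ℂ) (s : (ℤ → ℂ) →ₗ[ℂ] ((ℤ → ℂ) × (ℤ → ℂ)))
    (hs : ∀ f, (s f).2 = f) (hΩ : ∀ f, s (Casimir0 μ₀ μ₁ f) = CasimirN μ₀ μ₁ (s f))
    (f : ℤ → ℂ) : (2 * (1 + (μ₀ + μ₁))) • f = 0 := by
  have h := congrArg Prod.fst (hΩ f)
  rw [← Prod.mk.eta (p := s f), hs, casimirN_apply, casimir0_apply, map_smul,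
    casimir0_apply] at h
  simpa using h

theorem casimir_on_log_extension_general
    (μ₀ μ₁ : ℂ) :
    (∀ f : ℤ → ℂ,
      CasimirN μ₀ μ₁ (0, f) = ((2 * (1 + (μ₀ + μ₁))) • f, Casimir0 μ₀ μ₁ f)) ∧
    (μ₀ + μ₁ ≠ -1 →
      ¬ ∃ s : (ℤ → ℂ) →ₗ[ℂ] ((ℤ → ℂ) × (ℤ → ℂ)),
          (∀ f, (s f).2 = f) ∧
          (∀ f, s (Xop μ₁ f) = XN μ₁ (s f)) ∧
          (∀ f, s (Yop μ₀ f) = YN μ₀ (s f)) ∧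
          (∀ f, s (Hop μ₀ μ₁ f) = HN μ₀ μ₁ (s f))) := by
  refine ⟨fun f => by simp [casimirN_apply], fun hμ ⟨s, hs, hX, hY, hH⟩ => hμ ?_⟩
  have h := congrFun (smul_eq_zero_of_casimir_section μ₀ μ₁ s hs
    (casimirN_comp_of_equivariant μ₀ μ₁ s hX hY hH) 1) 0
  simp only [Pi.smul_apply, Pi.one_apply, smul_eq_mul, mul_one, Pi.zero_apply,
    mul_eq_zero, two_ne_zero, false_or] at h
  linear_combination h

/-- On `N = F_μ ⊕ u·F_μ` the Casimir operator satisfies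
`Ω(u f) = u·Ω(f) + 2(1+|μ|)·f`; in particular, when `|μ| = μ₀ + μ₁ ≠ −1` the self-extension
`0 → F_μ → N → F_μ → 0` does not split (there is no `sl(2)`-equivariant section of the
projection `N → F_μ`, `(f, g) ↦ g`). -/
theorem casimir_on_log_extension
    (μ₀ μ₁ : ℂ) (hμ₀ : ∀ z : ℤ, μ₀ ≠ z) (hμ₁ : ∀ z : ℤ, μ₁ ≠ z) :
    (∀ f : ℤ → ℂ,
      CasimirN μ₀ μ₁ (0, f) = ((2 * (1 + (μ₀ + μ₁))) • f, Casimir0 μ₀ μ₁ f)) ∧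
    (μ₀ + μ₁ ≠ -1 →
      ¬ ∃ s : (ℤ → ℂ) →ₗ[ℂ] ((ℤ → ℂ) × (ℤ → ℂ)),
          (∀ f, (s f).2 = f) ∧
          (∀ f, s (Xop μ₁ f) = XN μ₁ (s f)) ∧
          (∀ f, s (Yop μ₀ f) = YN μ₀ (s f)) ∧
          (∀ f, s (Hop μ₀ μ₁ f) = HN μ₀ μ₁ (s f))) :=
  casimir_on_log_extension_general μ₀ μ₁
end

section
/- A string representation I(S) of the quiver Q_n associated to a graded string S with vertices v₁,...,v_k is indecomposable: its endomorphism ring (as a representation of the quiver with relations xy = yx = 0) contains no nontrivial idempotents. -/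
/-! Graded strings for the Gelfand–Ponomarev quiver `Q_n` and their string representations.
Vertices `v₀,…,v_k` (type `Fin (k+1)`); the arrow between `v_i` and `v_{i+1}` is recorded by
`a i : Bool` (`true` = rightward, `x(e_i) = e_{i+1}`; `false` = leftward, `y(e_{i+1}) = e_i`).
Labels obey `l(v_{i+1}) = π₁(l(v_i))` for right arrows and `l(v_{i+1}) = π₂(l(v_i))` for left
arrows. -/

def p1 (n : ℕ) (i : Fin n) : Fin n :=
  if h : (i : ℕ) % 2 = 0 ∧ (i : ℕ) + 1 < n then ⟨(i : ℕ) + 1, h.2⟩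
  else if (i : ℕ) % 2 = 1 then
    ⟨(i : ℕ) - 1, lt_of_le_of_lt (Nat.sub_le _ _) i.isLt⟩
  else i

def p2 (n : ℕ) (i : Fin n) : Fin n :=
  if h : (i : ℕ) % 2 = 1 ∧ (i : ℕ) + 1 < n then ⟨(i : ℕ) + 1, h.2⟩
  else if (i : ℕ) % 2 = 0 ∧ (i : ℕ) ≠ 0 then
    ⟨(i : ℕ) - 1, lt_of_le_of_lt (Nat.sub_le _ _) i.isLt⟩
  else i

/-- The operator `x` of the string representation: `x(e_i) = e_{i+1}` for rightward arrows. -/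
noncomputable def xopS (k : ℕ) (a : Fin k → Bool) : Module.End ℂ (Fin (k + 1) → ℂ) where
  toFun f := fun j =>
    if h : 0 < (j : ℕ) then
      (if a ⟨(j : ℕ) - 1, by have := j.isLt; omega⟩ = true then
        f ⟨(j : ℕ) - 1, by have := j.isLt; omega⟩ else 0)
    else 0
  map_add' f g := by
    funext j; (try simp only [Pi.add_apply]); split_ifs <;> simp
  map_smul' c f := by
    funext j; (try simp only [Pi.smul_apply, smul_eq_mul, RingHom.id_apply]); split_ifs <;> simp

/-- The operator `y` of the string representation: `y(e_{i+1}) = e_i` for leftward arrows. -/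
noncomputable def yopS (k : ℕ) (a : Fin k → Bool) : Module.End ℂ (Fin (k + 1) → ℂ) where
  toFun f := fun j =>
    if h : (j : ℕ) < k then
      (if a ⟨(j : ℕ), h⟩ = false then f ⟨(j : ℕ) + 1, by omega⟩ else 0)
    else 0
  map_add' f g := by
    funext j; by_cases h : (j : ℕ) < k <;> simp [h] <;> split <;> simp
  map_smul' c f := by
    funext j; by_cases h : (j : ℕ) < k <;> simp [h] <;> split <;> simp


/-!
In the basis `e_j`, the matrix of an endomorphism `φ` commuting with `x` and `y` has constant
diagonal `c`: along a right arrow `φ e_{i+1} = x (φ e_i)`, along a left arrow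
`φ e_i = y (φ e_{i+1})`. For `j ≠ 0` one of `φ₀ⱼ`, `φⱼ₀` vanishes (the image of `x` has no
`e_0`-component, resp. `y e_0 = 0`), so idempotence of `φ` at the entry `(0, 0)` gives `c² = c`.
Then `φ` or `1 - φ` is an idempotent of trace `0`, which is zero in characteristic zero.
-/

open LinearMap in
theorem IsIdempotentElem.eq_zero_or_eq_one_of_toMatrix'_diag_eq {K ι : Type*} [Field K]
    [CharZero K] [Fintype ι] [DecidableEq ι] {φ : Module.End K (ι → K)}
    (hφ : IsIdempotentElem φ) {c : K} (hdiag : ∀ i, toMatrix' φ i i = c)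
    (hc : IsIdempotentElem c) : φ = 0 ∨ φ = 1 := by
  have htrace : trace K _ φ = Fintype.card ι * c := by
    rw [← Matrix.toLin'_toMatrix' φ, Matrix.trace_toLin'_eq, Matrix.trace]
    simp [hdiag]
  rcases IsIdempotentElem.iff_eq_zero_or_one.mp hc with rfl | rfl
  · exact .inl (hφ.eq_zero_of_trace_eq_zero (by simp [htrace]))
  · refine .inr (sub_eq_zero.mp (hφ.one_sub.eq_zero_of_trace_eq_zero ?_)).symm
    simp [htrace]

namespace StringRepresentation

open LinearMap

variable {k : ℕ} (a : Fin k → Bool) (f : Fin (k + 1) → ℂ)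

@[simp]
theorem xopS_apply_zero : xopS k a f 0 = 0 := rfl

@[simp]
theorem xopS_apply_succ (i : Fin k) : xopS k a f i.succ = if a i then f i.castSucc else 0 := rfl

@[simp]
theorem yopS_apply_castSucc (i : Fin k) :
    yopS k a f i.castSucc = if a i then 0 else f i.succ := by
  simp only [yopS, LinearMap.coe_mk, AddHom.coe_mk, Fin.val_castSucc, i.isLt, dif_pos]
  cases a i <;> rfl

@[simp]
theorem yopS_apply_last : yopS k a f (Fin.last k) = 0 := dif_neg (lt_irrefl k)

theorem xopS_single_castSucc {i : Fin k} (hi : a i) :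
    xopS k a (Pi.single i.castSucc 1) = Pi.single i.succ 1 := by
  ext j
  cases j using Fin.cases with
  | zero => simp
  | succ j => by_cases hj : j = i <;> simp [hj, hi]

theorem yopS_single_succ {i : Fin k} (hi : a i = false) :
    yopS k a (Pi.single i.succ 1) = Pi.single i.castSucc 1 := by
  ext j
  cases j using Fin.lastCases with
  | last => simp [Fin.castSucc_ne_last]
  | cast j => by_cases hj : j = i <;> simp [hj, hi]

theorem yopS_single_zero : yopS k a (Pi.single 0 1) = 0 := by
  ext j
  cases j using Fin.lastCases with
  | last => simp
  | cast j => simp [Fin.succ_ne_zero]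

variable {a} {φ : Module.End ℂ (Fin (k + 1) → ℂ)}
  (hx : φ * xopS k a = xopS k a * φ) (hy : φ * yopS k a = yopS k a * φ)
include hx hy

theorem toMatrix'_diag_eq (j : Fin (k + 1)) : toMatrix' φ j j = toMatrix' φ 0 0 := by
  induction j using Fin.induction with
  | zero => rfl
  | succ i ih =>
    rw [← ih]
    cases hi : a i
    · simpa [yopS_single_succ a hi, hi] using congr($hy (Pi.single i.succ 1) i.castSucc).symm
    · simpa [xopS_single_castSucc a hi, hi] using congr($hx (Pi.single i.castSucc 1) i.succ)

theorem toMatrix'_zero_succ_mul_succ_zero (i : Fin k) :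
    toMatrix' φ 0 i.succ * toMatrix' φ i.succ 0 = 0 := by
  cases hi : a i
  · have hzero : toMatrix' φ i.succ 0 = 0 := by
      simpa [yopS_single_zero, hi] using congr($hy (Pi.single 0 1) i.castSucc).symm
    rw [hzero, mul_zero]
  · have hzero : toMatrix' φ 0 i.succ = 0 := by
      simpa [xopS_single_castSucc a hi] using congr($hx (Pi.single i.castSucc 1) 0)
    rw [hzero, zero_mul]

theorem isIdempotentElem_toMatrix'_zero_zero (hφ : IsIdempotentElem φ) :
    IsIdempotentElem (toMatrix' φ 0 0) := by
  have hM : toMatrix' φ * toMatrix' φ = toMatrix' φ := by rw [← toMatrix'_mul, hφ.eq]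
  have := congr($hM 0 0)
  rwa [Matrix.mul_apply, Fin.sum_univ_succ,
    Finset.sum_eq_zero fun i _ => toMatrix'_zero_succ_mul_succ_zero hx hy i, add_zero] at this

end StringRepresentation

theorem string_representation_indecomposable_general
    (n k : ℕ) (l : Fin (k + 1) → Fin n) (a : Fin k → Bool) :
    ∀ φ : Module.End ℂ (Fin (k + 1) → ℂ),
      φ * (xopS k a) = (xopS k a) * φ →
      φ * (yopS k a) = (yopS k a) * φ →
      (∀ m : Fin n, ∀ f : Fin (k + 1) → ℂ, (∀ j, l j ≠ m → f j = 0) →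
        ∀ j, l j ≠ m → φ f j = 0) →
      φ * φ = φ → φ = 0 ∨ φ = 1 := fun _ hx hy _ hφ =>
  IsIdempotentElem.eq_zero_or_eq_one_of_toMatrix'_diag_eq hφ
    (StringRepresentation.toMatrix'_diag_eq hx hy)
    (StringRepresentation.isIdempotentElem_toMatrix'_zero_zero hx hy hφ)

/-- A string representation `I(S)` of the quiver `Q_n` is indecomposable:
every idempotent endomorphism of the representation (a linear map commuting with `x` and `y`
and preserving the grading by labels) is `0` or the identity. -/
theorem string_representation_indecomposable
    (n k : ℕ) (l : Fin (k + 1) → Fin n) (a : Fin k → Bool)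
    (hcompat : ∀ i : Fin k,
      l i.succ = if a i then p1 n (l i.castSucc) else p2 n (l i.castSucc)) :
    ∀ φ : Module.End ℂ (Fin (k + 1) → ℂ),
      φ * (xopS k a) = (xopS k a) * φ →
      φ * (yopS k a) = (yopS k a) * φ →
      (∀ m : Fin n, ∀ f : Fin (k + 1) → ℂ, (∀ j, l j ≠ m → f j = 0) →
        ∀ j, l j ≠ m → φ f j = 0) →
      φ * φ = φ → φ = 0 ∨ φ = 1 :=
  string_representation_indecomposable_general n k l a
end
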